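/- arXiv:2601.17968 — 3 statements merged into one kernel-verified Lean document; each statement's English description precedes it below -/
import Mathlib

section
/- There exists a constant M > 0 such that for every continuously differentiable function f : ℝ² → ℝ with compact support, ‖f‖_{L⁴(ℝ²)} ≤ M · ‖f‖_{L²(ℝ²)}^{1/2} · (‖f‖_{L²(ℝ²)}² + ‖∇f‖_{L²(ℝ²)}²)^{1/4}. -/
/-!
Apply the Gagliardo–Nirenberg–Sobolev inequality `‖u‖_{L²} ≤ C ‖∇u‖_{L¹}` of the plane to
`u = f²`. Since `∇(f²) = 2 f ∇f`, Cauchy–Schwarz bounds `‖∇u‖_{L¹}` by `2 ‖f‖_{L²} ‖∇f‖_{L²}`,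
so `‖f‖_{L⁴}⁴ ≤ 4 C² ‖f‖_{L²}² ‖∇f‖_{L²}²`; take fourth roots.
-/

open MeasureTheory Module

theorem ofReal_integral_norm_pow_eq_lintegral_enorm_pow {α F : Type*} [MeasurableSpace α]
    [TopologicalSpace α] [OpensMeasurableSpace α] {μ : Measure α} [IsFiniteMeasureOnCompacts μ]
    [NormedAddCommGroup F] {g : α → F} (hg : Continuous g) (h2g : HasCompactSupport g)
    {n : ℕ} (hn : n ≠ 0) :
    ENNReal.ofReal (∫ x, ‖g x‖ ^ n ∂μ) = ∫⁻ x, ‖g x‖ₑ ^ n ∂μ := by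
  have hint : Integrable (fun x => ‖g x‖ ^ n) μ :=
    (hg.norm.pow n).integrable_of_hasCompactSupport
      (h2g.comp_left (g := fun v : F => ‖v‖ ^ n) (by simp [hn]))
  simpa [Real.norm_eq_abs] using ofReal_integral_norm_eq_lintegral_enorm hint

theorem ENNReal.sq_lintegral_mul_le_mul_lintegral_sq {α : Type*} [MeasurableSpace α]
    (μ : Measure α) {f g : α → ENNReal} (hf : AEMeasurable f μ) (hg : AEMeasurable g μ) :
    (∫⁻ x, f x * g x ∂μ) ^ 2 ≤ (∫⁻ x, f x ^ 2 ∂μ) * ∫⁻ x, g x ^ 2 ∂μ := by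
  have h := ENNReal.lintegral_mul_le_Lp_mul_Lq μ Real.HolderConjugate.two_two hf hg
  calc (∫⁻ x, f x * g x ∂μ) ^ 2 ≤ (_ * _) ^ 2 := pow_le_pow_left' h 2
    _ = _ := by
      rw [mul_pow, ← ENNReal.rpow_natCast, ← ENNReal.rpow_natCast, ← ENNReal.rpow_mul,
        ← ENNReal.rpow_mul]
      norm_num

theorem enorm_fderiv_mul_self {E : Type*} [NormedAddCommGroup E] [NormedSpace ℝ E]
    {f : E → ℝ} {x : E} (hf : DifferentiableAt ℝ f x) :
    ‖fderiv ℝ (fun y => f y * f y) x‖ₑ = 2 * ‖f x‖ₑ * ‖fderiv ℝ f x‖ₑ := by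
  rw [fderiv_fun_mul hf hf, ← two_smul ℝ, smul_smul, enorm_smul, enorm_mul]
  congr
  exact_mod_cast Real.enorm_natCast 2

section Ladyzhenskaya

variable {E : Type*} [NormedAddCommGroup E] [NormedSpace ℝ E] [MeasurableSpace E] [BorelSpace E]
  [FiniteDimensional ℝ E] (μ : Measure E) [μ.IsAddHaarMeasure]

theorem lintegral_enorm_pow_four_le (hE : finrank ℝ E = 2) {f : E → ℝ} (hf : ContDiff ℝ 1 f)
    (h2f : HasCompactSupport f) :
    ∫⁻ x, ‖f x‖ₑ ^ 4 ∂μ ≤ 4 * lintegralPowLePowLIntegralFDerivConst μ 2 *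
      (∫⁻ x, ‖f x‖ₑ ^ 2 ∂μ) * ∫⁻ x, ‖fderiv ℝ f x‖ₑ ^ 2 ∂μ := by
  have hGNS := lintegral_pow_le_pow_lintegral_fderiv μ (hf.mul hf) h2f.mul_left
    (p := 2) (by rw [hE]; exact_mod_cast Real.HolderConjugate.two_two)
  simp only [ENNReal.rpow_two] at hGNS
  have hdf : Differentiable ℝ f := hf.differentiable one_ne_zero
  calc ∫⁻ x, ‖f x‖ₑ ^ 4 ∂μ = ∫⁻ x, ‖f x * f x‖ₑ ^ 2 ∂μ := by
        simp_rw [enorm_mul, ← pow_two, ← pow_mul]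
    _ ≤ lintegralPowLePowLIntegralFDerivConst μ 2 *
          (2 * ∫⁻ x, ‖f x‖ₑ * ‖fderiv ℝ f x‖ₑ ∂μ) ^ 2 := by
        simpa only [enorm_fderiv_mul_self (hdf _), mul_assoc,
          lintegral_const_mul' _ _ ENNReal.ofNat_ne_top] using hGNS
    _ ≤ lintegralPowLePowLIntegralFDerivConst μ 2 *
          (2 ^ 2 * ((∫⁻ x, ‖f x‖ₑ ^ 2 ∂μ) * ∫⁻ x, ‖fderiv ℝ f x‖ₑ ^ 2 ∂μ)) := by
        rw [mul_pow]
        gcongr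
        exact ENNReal.sq_lintegral_mul_le_mul_lintegral_sq μ hf.continuous.enorm.aemeasurable
          (hf.continuous_fderiv one_ne_zero).enorm.aemeasurable
    _ = _ := by ring

theorem integral_abs_pow_four_le (hE : finrank ℝ E = 2) {f : E → ℝ} (hf : ContDiff ℝ 1 f)
    (h2f : HasCompactSupport f) :
    ∫ x, |f x| ^ 4 ∂μ ≤ 4 * lintegralPowLePowLIntegralFDerivConst μ 2 *
      (∫ x, |f x| ^ 2 ∂μ) * ∫ x, ‖fderiv ℝ f x‖ ^ 2 ∂μ := by
  have hDf := hf.continuous_fderiv one_ne_zero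
  simp only [← Real.norm_eq_abs]
  rw [← ENNReal.ofReal_le_ofReal_iff (by positivity), ENNReal.ofReal_mul (by positivity),
    ENNReal.ofReal_mul (by positivity), ENNReal.ofReal_mul (by positivity),
    ofReal_integral_norm_pow_eq_lintegral_enorm_pow hf.continuous h2f four_ne_zero,
    ofReal_integral_norm_pow_eq_lintegral_enorm_pow hf.continuous h2f two_ne_zero,
    ofReal_integral_norm_pow_eq_lintegral_enorm_pow hDf (h2f.fderiv (𝕜 := ℝ)) two_ne_zero]
  simpa using lintegral_enorm_pow_four_le μ hE hf h2f

end Ladyzhenskaya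

theorem rpow_quarter_le_of_le_mul_mul {a b c K : ℝ} (ha : 0 ≤ a) (hb : 0 ≤ b) (hc : 0 ≤ c)
    (hK : 0 ≤ K) (h : c ≤ K * a * b) :
    c ^ (1 / 4 : ℝ) ≤
      K ^ (1 / 4 : ℝ) * (a ^ (1 / 2 : ℝ)) ^ (1 / 2 : ℝ) * (a + b) ^ (1 / 4 : ℝ) := by
  calc c ^ (1 / 4 : ℝ) ≤ (K * a * (a + b)) ^ (1 / 4 : ℝ) := by
        gcongr
        exact h.trans (by gcongr; linarith)
    _ = _ := by
        rw [Real.mul_rpow (by positivity) (by positivity), Real.mul_rpow hK ha, ← Real.rpow_mul ha]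
        norm_num

/-- Two-dimensional Gagliardo–Nirenberg (Ladyzhenskaya) interpolation inequality
`‖f‖_{L⁴} ≤ M ‖f‖_{L²}^{1/2} ‖f‖_{H¹}^{1/2}` for compactly supported `C¹` functions on `ℝ²`. -/
theorem stmt_0 :
    ∃ M : ℝ, 0 < M ∧
      ∀ f : EuclideanSpace ℝ (Fin 2) → ℝ,
        ContDiff ℝ 1 f → HasCompactSupport f →
        (∫ x, |f x| ^ 4) ^ ((1 : ℝ) / 4) ≤
          M * ((∫ x, |f x| ^ 2) ^ ((1 : ℝ) / 2)) ^ ((1 : ℝ) / 2) *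
            ((∫ x, |f x| ^ 2) + ∫ x, ‖fderiv ℝ f x‖ ^ 2) ^ ((1 : ℝ) / 4) := by
  set K : ℝ := 4 * lintegralPowLePowLIntegralFDerivConst
    (volume : Measure (EuclideanSpace ℝ (Fin 2))) 2
  -- `+ 1` because the Sobolev constant is only known to be nonnegative.
  refine ⟨K ^ (1 / 4 : ℝ) + 1, by positivity, fun f hf h2f => ?_⟩
  calc _ ≤ K ^ (1 / 4 : ℝ) * ((∫ x, |f x| ^ 2) ^ (1 / 2 : ℝ)) ^ (1 / 2 : ℝ) *
        ((∫ x, |f x| ^ 2) + ∫ x, ‖fderiv ℝ f x‖ ^ 2) ^ (1 / 4 : ℝ) :=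
        rpow_quarter_le_of_le_mul_mul (by positivity) (by positivity) (by positivity)
          (by positivity) (integral_abs_pow_four_le volume finrank_euclideanSpace_fin hf h2f)
    _ ≤ _ := by gcongr; linarith
end

section
/- There exists a constant M > 0 such that for every continuously differentiable function f : ℝ³ → ℝ with compact support, ‖f‖_{L⁴(ℝ³)} ≤ M · ‖f‖_{L²(ℝ³)}^{1/4} · (‖f‖_{L²(ℝ³)}² + ‖∇f‖_{L²(ℝ³)}²)^{3/8}. -/
/-!
Since `1/4 = (1/4)/2 + (3/4)/6`, Hölder's inequality interpolates `‖f‖₄ ≤ ‖f‖₂^{1/4} ‖f‖₆^{3/4}`.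
In dimension three the Gagliardo–Nirenberg–Sobolev inequality with `1/6 = 1/2 - 1/3` gives
`‖f‖₆ ≤ C ‖∇f‖₂`, and finally `‖∇f‖₂ ≤ ‖f‖_{H¹}`.
-/

open MeasureTheory Module
open scoped NNReal ENNReal

namespace MeasureTheory

section Interpolation

variable {α : Type*} [MeasurableSpace α] {μ : Measure α}

theorem eLpNorm_le_eLpNorm_rpow_mul_eLpNorm_rpow {ε : Type*} [TopologicalSpace ε]
    [ContinuousENorm ε] {f : α → ε} (hf : AEStronglyMeasurable f μ)
    {p q r : ℝ≥0} {θ : ℝ} (hp : p ≠ 0) (hr : r ≠ 0) (hθ₀ : 0 ≤ θ) (hθ₁ : θ ≤ 1)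
    (hq : (q : ℝ)⁻¹ = θ / p + (1 - θ) / r) :
    eLpNorm f q μ ≤ eLpNorm f p μ ^ θ * eLpNorm f r μ ^ (1 - θ) := by
  rcases eq_or_ne q 0 with rfl | hq₀
  · simp
  have hp' : (p : ℝ) ≠ 0 := by exact_mod_cast hp
  have hr' : (r : ℝ) ≠ 0 := by exact_mod_cast hr
  have hq' : (q : ℝ) ≠ 0 := by exact_mod_cast hq₀
  -- `|f|^q = (|f|^p)^a (|f|^r)^b` with `a + b = 1`, so Hölder applies with exponents `1/a, 1/b`.
  set a : ℝ := q * θ / p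
  set b : ℝ := q * (1 - θ) / r
  have ha : 0 ≤ a := by positivity
  have hb : 0 ≤ b := div_nonneg (mul_nonneg q.2 (by linarith)) r.2
  have hab : a + b = 1 := by
    simp only [a, b, mul_div_assoc, ← mul_add, ← hq, mul_inv_cancel₀ hq']
  have hpow : ∀ x, ‖f x‖ₑ ^ (q : ℝ) = (‖f x‖ₑ ^ (p : ℝ)) ^ a * (‖f x‖ₑ ^ (r : ℝ)) ^ b := by
    intro x
    rw [← ENNReal.rpow_mul, ← ENNReal.rpow_mul,
      ← ENNReal.rpow_add_of_nonneg _ _ (by positivity) (by positivity)]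
    congr 1
    simp only [a, b]
    field_simp
    ring
  have holder := ENNReal.lintegral_mul_norm_pow_le (μ := μ)
    (hf.enorm.pow_const (p : ℝ)) (hf.enorm.pow_const (r : ℝ)) ha hb hab
  simp_rw [← hpow] at holder
  rw [eLpNorm_nnreal_eq_lintegral hq₀, eLpNorm_nnreal_eq_lintegral hp,
    eLpNorm_nnreal_eq_lintegral hr]
  calc (∫⁻ x, ‖f x‖ₑ ^ (q : ℝ) ∂μ) ^ (1 / (q : ℝ))
      ≤ ((∫⁻ x, ‖f x‖ₑ ^ (p : ℝ) ∂μ) ^ a * (∫⁻ x, ‖f x‖ₑ ^ (r : ℝ) ∂μ) ^ b) ^ (1 / (q : ℝ)) :=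
        ENNReal.rpow_le_rpow holder (by positivity)
    _ = _ := by
      rw [ENNReal.mul_rpow_of_nonneg _ _ (by positivity), ← ENNReal.rpow_mul, ← ENNReal.rpow_mul,
        ← ENNReal.rpow_mul, ← ENNReal.rpow_mul]
      congr 2 <;> simp only [a, b] <;> field_simp

theorem lpNorm_ofNat_eq_integral_norm_pow {E : Type*} [NormedAddCommGroup E] {f : α → E}
    (n : ℕ) [n.AtLeastTwo] (hf : AEStronglyMeasurable f μ) :
    lpNorm f ofNat(n) μ = (∫ x, ‖f x‖ ^ (ofNat(n) : ℕ) ∂μ) ^ (1 / (ofNat(n) : ℝ)) := by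
  simp [lpNorm_eq_integral_norm_rpow_toReal (NeZero.ne _) ENNReal.ofNat_ne_top hf]

end Interpolation

variable {E : Type*} [NormedAddCommGroup E] [NormedSpace ℝ E] [MeasurableSpace E] [BorelSpace E]
  [FiniteDimensional ℝ E] (μ : Measure E) [μ.IsAddHaarMeasure]
  {F : Type*} [NormedAddCommGroup F] [InnerProductSpace ℝ F]

theorem eLpNorm_four_le_eLpNorm_two_rpow_mul_eLpNorm_fderiv_two_rpow (hE : finrank ℝ E = 3)
    {u : E → F} (hu : ContDiff ℝ 1 u) (h2u : HasCompactSupport u) :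
    eLpNorm u 4 μ ≤ (eLpNormLESNormFDerivOfEqInnerConst μ 2 : ℝ≥0∞) ^ (3 / 4 : ℝ) *
      eLpNorm u 2 μ ^ (1 / 4 : ℝ) * eLpNorm (fderiv ℝ u) 2 μ ^ (3 / 4 : ℝ) := by
  have interpolation : eLpNorm u (4 : ℝ≥0) μ ≤
      eLpNorm u (2 : ℝ≥0) μ ^ (1 / 4 : ℝ) * eLpNorm u (6 : ℝ≥0) μ ^ (1 - 1 / 4 : ℝ) :=
    eLpNorm_le_eLpNorm_rpow_mul_eLpNorm_rpow hu.continuous.aestronglyMeasurable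
      two_ne_zero (by norm_num) (by norm_num) (by norm_num) (by norm_num)
  have sobolev : eLpNorm u (6 : ℝ≥0) μ ≤
      eLpNormLESNormFDerivOfEqInnerConst μ 2 * eLpNorm (fderiv ℝ u) (2 : ℝ≥0) μ :=
    eLpNorm_le_eLpNorm_fderiv_of_eq_inner μ hu h2u one_le_two (by rw [hE]; norm_num)
      (by rw [hE]; norm_num)
  norm_num at interpolation sobolev
  calc eLpNorm u 4 μ ≤ eLpNorm u 2 μ ^ (1 / 4 : ℝ) * eLpNorm u 6 μ ^ (3 / 4 : ℝ) := interpolation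
    _ ≤ eLpNorm u 2 μ ^ (1 / 4 : ℝ) *
        (eLpNormLESNormFDerivOfEqInnerConst μ 2 * eLpNorm (fderiv ℝ u) 2 μ) ^ (3 / 4 : ℝ) := by
      gcongr
    _ = _ := by rw [ENNReal.mul_rpow_of_nonneg _ _ (by norm_num)]; ring

theorem lpNorm_four_le_lpNorm_two_rpow_mul_lpNorm_fderiv_two_rpow (hE : finrank ℝ E = 3)
    {u : E → F} (hu : ContDiff ℝ 1 u) (h2u : HasCompactSupport u) :
    lpNorm u 4 μ ≤ (eLpNormLESNormFDerivOfEqInnerConst μ 2 : ℝ) ^ (3 / 4 : ℝ) *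
      lpNorm u 2 μ ^ (1 / 4 : ℝ) * lpNorm (fderiv ℝ u) 2 μ ^ (3 / 4 : ℝ) := by
  have hu₂ : MemLp u 2 μ := hu.continuous.memLp_of_hasCompactSupport h2u
  have hDu₂ : MemLp (fderiv ℝ u) 2 μ :=
    (hu.continuous_fderiv one_ne_zero).memLp_of_hasCompactSupport (h2u.fderiv (𝕜 := ℝ))
  have hfin : (eLpNormLESNormFDerivOfEqInnerConst μ 2 : ℝ≥0∞) ^ (3 / 4 : ℝ) *
      eLpNorm u 2 μ ^ (1 / 4 : ℝ) * eLpNorm (fderiv ℝ u) 2 μ ^ (3 / 4 : ℝ) ≠ ⊤ := by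
    refine ENNReal.mul_ne_top (ENNReal.mul_ne_top ?_ ?_) ?_ <;>
      refine ENNReal.rpow_ne_top_of_nonneg (by norm_num) ?_
    exacts [ENNReal.coe_ne_top, hu₂.eLpNorm_ne_top, hDu₂.eLpNorm_ne_top]
  simpa [← toReal_eLpNorm, hu.continuous.aestronglyMeasurable, hu₂.1, hDu₂.1,
    ← ENNReal.toReal_rpow] using ENNReal.toReal_mono hfin
      (eLpNorm_four_le_eLpNorm_two_rpow_mul_eLpNorm_fderiv_two_rpow μ hE hu h2u)

end MeasureTheory

/-- Three-dimensional Gagliardo–Nirenberg interpolation inequality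
`‖f‖_{L⁴} ≤ M ‖f‖_{L²}^{1/4} ‖f‖_{H¹}^{3/4}` for compactly supported `C¹` functions on `ℝ³`. -/
theorem stmt_1 :
    ∃ M : ℝ, 0 < M ∧
      ∀ f : EuclideanSpace ℝ (Fin 3) → ℝ,
        ContDiff ℝ 1 f → HasCompactSupport f →
        (∫ x, |f x| ^ 4) ^ ((1 : ℝ) / 4) ≤
          M * ((∫ x, |f x| ^ 2) ^ ((1 : ℝ) / 2)) ^ ((1 : ℝ) / 4) *
            ((∫ x, |f x| ^ 2) + ∫ x, ‖fderiv ℝ f x‖ ^ 2) ^ ((3 : ℝ) / 8) := by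
  set C : ℝ := ↑(eLpNormLESNormFDerivOfEqInnerConst (volume : Measure (EuclideanSpace ℝ (Fin 3))) 2)
  refine ⟨C ^ (3 / 4 : ℝ) + 1, by positivity, fun f hf h2f => ?_⟩
  have hGN := lpNorm_four_le_lpNorm_two_rpow_mul_lpNorm_fderiv_two_rpow volume
    finrank_euclideanSpace_fin hf h2f
  simp only [lpNorm_ofNat_eq_integral_norm_pow _ hf.continuous.aestronglyMeasurable,
    lpNorm_ofNat_eq_integral_norm_pow _ (hf.continuous_fderiv one_ne_zero).aestronglyMeasurable,
    Real.norm_eq_abs] at hGN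
  have ha : 0 ≤ ∫ x, |f x| ^ 2 := integral_nonneg fun x => by positivity
  have hd : 0 ≤ ∫ x, ‖fderiv ℝ f x‖ ^ 2 := integral_nonneg fun x => by positivity
  refine hGN.trans ?_
  gcongr ?_ * _ * ?_
  · exact le_add_of_nonneg_right zero_le_one
  · rw [← Real.rpow_mul hd, show (1 / 2 : ℝ) * (3 / 4) = 3 / 8 by norm_num]
    exact Real.rpow_le_rpow hd (le_add_of_nonneg_left ha) (by norm_num)
end

section
/- Let L₁, L₂ > 0, Ω = (0, L₁) × (0, L₂) ⊆ ℝ², k ≥ 0, D > 0, M₂ ≥ 0, and let κ : ℝ² → ℝ be continuous with κ(x) ≥ 0 for all x in the closure of Ω. Let u = (u₁, u₂) : [0, ∞) × ℝ² → ℝ² be continuous on [0, ∞) × cl(Ω), and let c : [0, ∞) × ℝ² → ℝ be continuous on [0, ∞) × cl(Ω), continuously differentiable in t and twice continuously differentiable in x on (0, ∞) × cl(Ω). Assume: (i) ∂u₁/∂x₁ + ∂u₂/∂x₂ = 0 on (0, ∞) × Ω; (ii) (1 + k)·∂c/∂t + u₁·∂c/∂x₁ + u₂·∂c/∂x₂ =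 D·(∂²c/∂x₁² + ∂²c/∂x₂²) − κ·c on (0, ∞) × Ω; (iii) for all t > 0: u₁(t, x) = 0 and ∂c/∂x₁(t, x) = 0 whenever x₁ ∈ {0, L₁} and x₂ ∈ [0, L₂], and u₂(t, x) = 0 and ∂c/∂x₂(t, x) = 0 whenever x₂ ∈ {0, L₂} and x₁ ∈ [0, L₁]; (iv) 0 ≤ c(0, x) ≤ M₂ for all x ∈ cl(Ω). Then 0 ≤ c(t, x) ≤ M₂ for all t ≥ 0 and all x ∈ cl(Ω). -/
/-!
For `ε > 0` the function `c - ε t` attains its maximum over `[0, T] × cl(Ω)`. If that maximum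
exceeded `M ≥ 0`, it would be attained at some `t₀ > 0`, where `∂ₜc ≥ ε`, `∇c = 0` (Fermat in the
interior, the no-flux condition on the boundary) and `∂²ₓc, ∂²ᵧc ≤ 0` (a one-sided second-derivative
test, valid on the boundary because the normal derivative vanishes there). The equation, which
extends to `cl(Ω)` by continuity, then gives `(1 + k) ε ≤ -κ c ≤ 0`. Letting `ε → 0` gives `c ≤ M`;
the lower bound is the same argument applied to `-c`.
-/

open Set Filter Topology

theorem HasDerivAt.nonneg_of_isMaxOn_Icc_right_endpoint {f : ℝ → ℝ} {f' a b : ℝ} (hba : b < a)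
    (hf : HasDerivAt f f' a) (hmax : IsMaxOn f (Icc b a) a) : 0 ≤ f' := by
  have hslope : Tendsto (slope f a) (𝓝[<] a) (𝓝 f') :=
    (hasDerivWithinAt_iff_tendsto_slope' (s := Iio a) (lt_irrefl a)).1 hf.hasDerivWithinAt
  refine ge_of_tendsto hslope ?_
  filter_upwards [Ioo_mem_nhdsLT hba] with s hs
  rw [slope_def_field]
  exact div_nonneg_of_nonpos (sub_nonpos.2 (hmax ⟨hs.1.le, hs.2.le⟩)) (sub_nonpos.2 hs.2.le)

theorem HasDerivAt.eq_zero_of_isMaxOn_Icc {f f' : ℝ → ℝ} {a lo hi : ℝ} (ha : a ∈ Icc lo hi)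
    (hf : HasDerivAt f (f' a) a) (hlo : f' lo = 0) (hhi : f' hi = 0)
    (hmax : IsMaxOn f (Icc lo hi) a) : f' a = 0 := by
  rcases ha.1.eq_or_lt with rfl | hloa
  · exact hlo
  rcases ha.2.eq_or_lt with rfl | hahi
  · exact hhi
  exact (hmax.isLocalMax (Icc_mem_nhds hloa hahi)).hasDerivAt_eq_zero hf

theorem HasDerivAt.nonpos_of_isMaxOn_Icc_left_endpoint {f f' : ℝ → ℝ} {f'' a b : ℝ} (hab : a < b)
    (hf : ∀ x ∈ Icc a b, HasDerivAt f (f' x) x) (hf' : HasDerivAt f' f'' a) (hf'a : f' a = 0)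
    (hmax : IsMaxOn f (Icc a b) a) : f'' ≤ 0 := by
  have hslope : Tendsto (slope f' a) (𝓝[>] a) (𝓝 f'') :=
    (hasDerivWithinAt_iff_tendsto_slope' (lt_irrefl a)).1 hf'.hasDerivWithinAt
  refine le_of_tendsto_of_frequently hslope ((nhdsGT_basis a).frequently_iff.2 fun u hu ↦ ?_)
  obtain ⟨ξ, hξ, hξeq⟩ := exists_hasDerivAt_eq_slope f f' (lt_min hu hab)
    (fun x hx ↦ (hf x ⟨hx.1, hx.2.trans (min_le_right _ _)⟩).continuousAt.continuousWithinAt)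
    (fun x hx ↦ hf x ⟨hx.1.le, hx.2.le.trans (min_le_right _ _)⟩)
  refine ⟨ξ, ⟨hξ.1, hξ.2.trans_le (min_le_left _ _)⟩, ?_⟩
  have hfξ : f' ξ ≤ 0 := hξeq ▸ div_nonpos_of_nonpos_of_nonneg
    (sub_nonpos.2 (hmax ⟨(lt_min hu hab).le, min_le_right _ _⟩)) (sub_nonneg.2 (lt_min hu hab).le)
  rw [slope_def_field, hf'a, sub_zero]
  exact div_nonpos_of_nonpos_of_nonneg hfξ (sub_nonneg.2 hξ.1.le)

theorem HasDerivAt.nonpos_of_isMaxOn_Icc_right_endpoint {f f' : ℝ → ℝ} {f'' a b : ℝ} (hba : b < a)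
    (hf : ∀ x ∈ Icc b a, HasDerivAt f (f' x) x) (hf' : HasDerivAt f' f'' a) (hf'a : f' a = 0)
    (hmax : IsMaxOn f (Icc b a) a) : f'' ≤ 0 := by
  have hslope : Tendsto (slope f' a) (𝓝[<] a) (𝓝 f'') :=
    (hasDerivWithinAt_iff_tendsto_slope' (s := Iio a) (lt_irrefl a)).1 hf'.hasDerivWithinAt
  refine le_of_tendsto_of_frequently hslope ((nhdsLT_basis a).frequently_iff.2 fun u hu ↦ ?_)
  obtain ⟨ξ, hξ, hξeq⟩ := exists_hasDerivAt_eq_slope f f' (max_lt hu hba)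
    (fun x hx ↦ (hf x ⟨(le_max_right _ _).trans hx.1, hx.2⟩).continuousAt.continuousWithinAt)
    (fun x hx ↦ hf x ⟨(le_max_right _ _).trans hx.1.le, hx.2.le⟩)
  refine ⟨ξ, ⟨(le_max_left _ _).trans_lt hξ.1, hξ.2⟩, ?_⟩
  have hfξ : 0 ≤ f' ξ := hξeq ▸ div_nonneg
    (sub_nonneg.2 (hmax ⟨le_max_right _ _, (max_lt hu hba).le⟩)) (sub_nonneg.2 (max_lt hu hba).le)
  rw [slope_def_field, hf'a, sub_zero]
  exact div_nonpos_of_nonneg_of_nonpos hfξ (sub_nonpos.2 hξ.2.le)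

theorem HasDerivAt.nonpos_of_isMaxOn_Icc {f f' : ℝ → ℝ} {f'' a lo hi : ℝ} (hlohi : lo < hi)
    (ha : a ∈ Icc lo hi) (hf : ∀ x ∈ Icc lo hi, HasDerivAt f (f' x) x) (hf' : HasDerivAt f' f'' a)
    (hf'a : f' a = 0) (hmax : IsMaxOn f (Icc lo hi) a) : f'' ≤ 0 := by
  rcases ha.2.lt_or_eq with hahi | rfl
  · exact hf'.nonpos_of_isMaxOn_Icc_left_endpoint hahi (fun x hx ↦ hf x ⟨ha.1.trans hx.1, hx.2⟩)
      hf'a (hmax.on_subset (Icc_subset_Icc_left ha.1))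
  · exact hf'.nonpos_of_isMaxOn_Icc_right_endpoint hlohi hf hf'a hmax

theorem ContinuousOn.time_slice {g : ℝ → ℝ → ℝ → ℝ} {S : Set ℝ} {K : Set (ℝ × ℝ)} {t : ℝ}
    (hg : ContinuousOn (fun q : ℝ × ℝ × ℝ => g q.1 q.2.1 q.2.2) (S ×ˢ K)) (ht : t ∈ S) :
    ContinuousOn (fun p : ℝ × ℝ => g t p.1 p.2) K :=
  hg.uncurry_left (f := fun s (p : ℝ × ℝ) => g s p.1 p.2) t ht

theorem Set.EqOn.of_Ioo_prod_Ioo {α : Type*} [TopologicalSpace α] [T2Space α]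
    {f g : ℝ × ℝ → α} {a b c d : ℝ} (hab : a < b) (hcd : c < d)
    (h : EqOn f g (Ioo a b ×ˢ Ioo c d)) (hf : ContinuousOn f (Icc a b ×ˢ Icc c d))
    (hg : ContinuousOn g (Icc a b ×ˢ Icc c d)) : EqOn f g (Icc a b ×ˢ Icc c d) :=
  h.of_subset_closure hf hg (prod_mono Ioo_subset_Icc_self Ioo_subset_Icc_self)
    (by rw [closure_prod_eq, closure_Ioo hab.ne, closure_Ioo hcd.ne])

structure IsNeumannSolution (L₁ L₂ k D : ℝ) (κ : ℝ → ℝ → ℝ)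
    (u₁ u₂ c ct cx cy cxx cyy : ℝ → ℝ → ℝ → ℝ) : Prop where
  hasDerivAt_t : ∀ t > (0:ℝ), ∀ x ∈ Icc 0 L₁, ∀ y ∈ Icc 0 L₂,
    HasDerivAt (fun s => c s x y) (ct t x y) t
  hasDerivAt_x : ∀ t > (0:ℝ), ∀ x ∈ Icc 0 L₁, ∀ y ∈ Icc 0 L₂,
    HasDerivAt (fun a => c t a y) (cx t x y) x
  hasDerivAt_y : ∀ t > (0:ℝ), ∀ x ∈ Icc 0 L₁, ∀ y ∈ Icc 0 L₂,
    HasDerivAt (fun b => c t x b) (cy t x y) y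
  hasDerivAt_xx : ∀ t > (0:ℝ), ∀ x ∈ Icc 0 L₁, ∀ y ∈ Icc 0 L₂,
    HasDerivAt (fun a => cx t a y) (cxx t x y) x
  hasDerivAt_yy : ∀ t > (0:ℝ), ∀ x ∈ Icc 0 L₁, ∀ y ∈ Icc 0 L₂,
    HasDerivAt (fun b => cy t x b) (cyy t x y) y
  pde : ∀ t > (0:ℝ), ∀ x ∈ Icc 0 L₁, ∀ y ∈ Icc 0 L₂,
    (1 + k) * ct t x y + u₁ t x y * cx t x y + u₂ t x y * cy t x y =
      D * (cxx t x y + cyy t x y) - κ x y * c t x y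
  neumann_x : ∀ t > (0:ℝ), ∀ y ∈ Icc 0 L₂, cx t 0 y = 0 ∧ cx t L₁ y = 0
  neumann_y : ∀ t > (0:ℝ), ∀ x ∈ Icc 0 L₁, cy t x 0 = 0 ∧ cy t x L₂ = 0

namespace IsNeumannSolution

variable {L₁ L₂ k D M : ℝ} {κ : ℝ → ℝ → ℝ} {u₁ u₂ c ct cx cy cxx cyy : ℝ → ℝ → ℝ → ℝ}

theorem neg (h : IsNeumannSolution L₁ L₂ k D κ u₁ u₂ c ct cx cy cxx cyy) :
    IsNeumannSolution L₁ L₂ k D κ u₁ u₂ (fun t x y => -c t x y) (fun t x y => -ct t x y)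
      (fun t x y => -cx t x y) (fun t x y => -cy t x y) (fun t x y => -cxx t x y)
      (fun t x y => -cyy t x y) where
  hasDerivAt_t t ht x hx y hy := (h.hasDerivAt_t t ht x hx y hy).neg
  hasDerivAt_x t ht x hx y hy := (h.hasDerivAt_x t ht x hx y hy).neg
  hasDerivAt_y t ht x hx y hy := (h.hasDerivAt_y t ht x hx y hy).neg
  hasDerivAt_xx t ht x hx y hy := (h.hasDerivAt_xx t ht x hx y hy).neg
  hasDerivAt_yy t ht x hx y hy := (h.hasDerivAt_yy t ht x hx y hy).neg
  pde t ht x hx y hy := by linarith [h.pde t ht x hx y hy]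
  neumann_x t ht y hy := by simp [h.neumann_x t ht y hy]
  neumann_y t ht x hx := by simp [h.neumann_y t ht x hx]

theorem false_of_isMaxOn_sub_mul (h : IsNeumannSolution L₁ L₂ k D κ u₁ u₂ c ct cx cy cxx cyy)
    (hL₁ : 0 < L₁) (hL₂ : 0 < L₂) (hk : 0 ≤ k) (hD : 0 ≤ D)
    (hκ : ∀ x ∈ Icc 0 L₁, ∀ y ∈ Icc 0 L₂, 0 ≤ κ x y) {ε t₀ x₀ y₀ : ℝ} (hε : 0 < ε)
    (ht₀ : 0 < t₀) (hx₀ : x₀ ∈ Icc 0 L₁) (hy₀ : y₀ ∈ Icc 0 L₂) (hc₀ : 0 ≤ c t₀ x₀ y₀)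
    (hmax_t : IsMaxOn (fun s => c s x₀ y₀ - ε * s) (Icc 0 t₀) t₀)
    (hmax_x : IsMaxOn (fun a => c t₀ a y₀) (Icc 0 L₁) x₀)
    (hmax_y : IsMaxOn (fun b => c t₀ x₀ b) (Icc 0 L₂) y₀) : False := by
  have hct : ε ≤ ct t₀ x₀ y₀ := by
    have := ((h.hasDerivAt_t t₀ ht₀ x₀ hx₀ y₀ hy₀).sub
      ((hasDerivAt_id t₀).const_mul ε)).nonneg_of_isMaxOn_Icc_right_endpoint ht₀ hmax_t
    linarith
  have hcx : cx t₀ x₀ y₀ = 0 :=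
    (h.hasDerivAt_x t₀ ht₀ x₀ hx₀ y₀ hy₀).eq_zero_of_isMaxOn_Icc (f' := (cx t₀ · y₀)) hx₀
      (h.neumann_x t₀ ht₀ y₀ hy₀).1 (h.neumann_x t₀ ht₀ y₀ hy₀).2 hmax_x
  have hcy : cy t₀ x₀ y₀ = 0 :=
    (h.hasDerivAt_y t₀ ht₀ x₀ hx₀ y₀ hy₀).eq_zero_of_isMaxOn_Icc (f' := (cy t₀ x₀ ·)) hy₀
      (h.neumann_y t₀ ht₀ x₀ hx₀).1 (h.neumann_y t₀ ht₀ x₀ hx₀).2 hmax_y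
  have hcxx : cxx t₀ x₀ y₀ ≤ 0 :=
    (h.hasDerivAt_xx t₀ ht₀ x₀ hx₀ y₀ hy₀).nonpos_of_isMaxOn_Icc hL₁ hx₀
      (fun a ha ↦ h.hasDerivAt_x t₀ ht₀ a ha y₀ hy₀) hcx hmax_x
  have hcyy : cyy t₀ x₀ y₀ ≤ 0 :=
    (h.hasDerivAt_yy t₀ ht₀ x₀ hx₀ y₀ hy₀).nonpos_of_isMaxOn_Icc hL₂ hy₀
      (fun b hb ↦ h.hasDerivAt_y t₀ ht₀ x₀ hx₀ b hb) hcy hmax_y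
  have hpde := h.pde t₀ ht₀ x₀ hx₀ y₀ hy₀
  rw [hcx, hcy] at hpde
  linarith [mul_le_mul_of_nonneg_left hct (by linarith : (0:ℝ) ≤ 1 + k),
    mul_pos (by linarith : (0:ℝ) < 1 + k) hε, mul_nonneg (hκ x₀ hx₀ y₀ hy₀) hc₀,
    mul_nonpos_of_nonneg_of_nonpos hD (add_nonpos hcxx hcyy)]

theorem sub_mul_le_of_initial_le (h : IsNeumannSolution L₁ L₂ k D κ u₁ u₂ c ct cx cy cxx cyy)
    (hL₁ : 0 < L₁) (hL₂ : 0 < L₂) (hk : 0 ≤ k) (hD : 0 ≤ D) (hM : 0 ≤ M)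
    (hκ : ∀ x ∈ Icc 0 L₁, ∀ y ∈ Icc 0 L₂, 0 ≤ κ x y)
    (hc : ContinuousOn (fun q : ℝ × ℝ × ℝ => c q.1 q.2.1 q.2.2) (Ici 0 ×ˢ Icc 0 L₁ ×ˢ Icc 0 L₂))
    (hinit : ∀ x ∈ Icc 0 L₁, ∀ y ∈ Icc 0 L₂, c 0 x y ≤ M) {ε T : ℝ} (hε : 0 < ε) (hT : 0 ≤ T) :
    ∀ t ∈ Icc 0 T, ∀ x ∈ Icc 0 L₁, ∀ y ∈ Icc 0 L₂, c t x y - ε * t ≤ M := by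
  set w : ℝ × ℝ × ℝ → ℝ := fun q => c q.1 q.2.1 q.2.2 - ε * q.1
  have hw : ContinuousOn w (Icc 0 T ×ˢ Icc 0 L₁ ×ˢ Icc 0 L₂) :=
    (hc.mono (prod_mono Icc_subset_Ici_self subset_rfl)).sub (by fun_prop)
  obtain ⟨⟨t₀, x₀, y₀⟩, ⟨ht₀, hx₀, hy₀⟩, hmax⟩ :=
    (isCompact_Icc.prod (isCompact_Icc.prod isCompact_Icc)).exists_isMaxOn
      ⟨(0, 0, 0), ⟨le_rfl, hT⟩, ⟨le_rfl, hL₁.le⟩, ⟨le_rfl, hL₂.le⟩⟩ hw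
  suffices w (t₀, x₀, y₀) ≤ M from
    fun t ht x hx y hy ↦ (hmax (show (t, x, y) ∈ _ from ⟨ht, hx, hy⟩) : w _ ≤ _).trans this
  by_contra! hwM
  have ht₀pos : 0 < t₀ := by
    refine ht₀.1.lt_of_ne fun h0 ↦ ?_
    subst h0
    simp only [w, mul_zero, sub_zero] at hwM
    exact (hinit x₀ hx₀ y₀ hy₀).not_gt hwM
  refine h.false_of_isMaxOn_sub_mul hL₁ hL₂ hk hD hκ hε ht₀pos hx₀ hy₀ ?_
    (fun s hs ↦ hmax (show (s, x₀, y₀) ∈ _ from ⟨⟨hs.1, hs.2.trans ht₀.2⟩, hx₀, hy₀⟩))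
    (fun a ha ↦ (sub_le_sub_iff_right (ε * t₀)).1
      (hmax (show (t₀, a, y₀) ∈ _ from ⟨ht₀, ha, hy₀⟩)))
    (fun b hb ↦ (sub_le_sub_iff_right (ε * t₀)).1
      (hmax (show (t₀, x₀, b) ∈ _ from ⟨ht₀, hx₀, hb⟩)))
  linarith [mul_pos hε ht₀pos, show M < c t₀ x₀ y₀ - ε * t₀ from hwM]

theorem le_of_initial_le (h : IsNeumannSolution L₁ L₂ k D κ u₁ u₂ c ct cx cy cxx cyy)
    (hL₁ : 0 < L₁) (hL₂ : 0 < L₂) (hk : 0 ≤ k) (hD : 0 ≤ D) (hM : 0 ≤ M)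
    (hκ : ∀ x ∈ Icc 0 L₁, ∀ y ∈ Icc 0 L₂, 0 ≤ κ x y)
    (hc : ContinuousOn (fun q : ℝ × ℝ × ℝ => c q.1 q.2.1 q.2.2) (Ici 0 ×ˢ Icc 0 L₁ ×ˢ Icc 0 L₂))
    (hinit : ∀ x ∈ Icc 0 L₁, ∀ y ∈ Icc 0 L₂, c 0 x y ≤ M) :
    ∀ t, 0 ≤ t → ∀ x ∈ Icc 0 L₁, ∀ y ∈ Icc 0 L₂, c t x y ≤ M := by
  intro t ht x hx y hy
  have hlim : Tendsto (fun ε => c t x y - ε * t) (𝓝[>] 0) (𝓝 (c t x y)) := by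
    have : Tendsto (fun ε => c t x y - ε * t) (𝓝 0) (𝓝 (c t x y - 0 * t)) :=
      (Continuous.tendsto (by fun_prop) 0)
    simpa using this.mono_left nhdsWithin_le_nhds
  refine le_of_tendsto hlim ?_
  filter_upwards [self_mem_nhdsWithin] with ε hε
  exact h.sub_mul_le_of_initial_le hL₁ hL₂ hk hD hM hκ hc hinit hε ht t ⟨ht, le_rfl⟩ x hx y hy

end IsNeumannSolution

theorem stmt_18_general (L₁ L₂ k D M₂ : ℝ) (hL₁ : 0 < L₁) (hL₂ : 0 < L₂)
    (hk : 0 ≤ k) (hD : 0 < D) (hM₂ : 0 ≤ M₂)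
    (κ : ℝ → ℝ → ℝ)
    (hκcont : ContinuousOn (fun q : ℝ × ℝ => κ q.1 q.2) (Set.Icc 0 L₁ ×ˢ Set.Icc 0 L₂))
    (hκnn : ∀ x ∈ Set.Icc 0 L₁, ∀ y ∈ Set.Icc 0 L₂, 0 ≤ κ x y)
    (u₁ u₂ c ct cx cy cxx cyy : ℝ → ℝ → ℝ → ℝ)
    -- continuity of the velocity on `[0,∞) × cl(Ω)`
    (hu₁cont : ContinuousOn (fun q : ℝ × ℝ × ℝ => u₁ q.1 q.2.1 q.2.2)
      (Set.Ici 0 ×ˢ Set.Icc 0 L₁ ×ˢ Set.Icc 0 L₂))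
    (hu₂cont : ContinuousOn (fun q : ℝ × ℝ × ℝ => u₂ q.1 q.2.1 q.2.2)
      (Set.Ici 0 ×ˢ Set.Icc 0 L₁ ×ˢ Set.Icc 0 L₂))
    -- continuity of the concentration on `[0,∞) × cl(Ω)`
    (hccont : ContinuousOn (fun q : ℝ × ℝ × ℝ => c q.1 q.2.1 q.2.2)
      (Set.Ici 0 ×ˢ Set.Icc 0 L₁ ×ˢ Set.Icc 0 L₂))
    -- existence of the partial derivatives of `c` on `(0,∞) × cl(Ω)`
    (hct : ∀ t > (0:ℝ), ∀ x ∈ Set.Icc 0 L₁, ∀ y ∈ Set.Icc 0 L₂,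
      HasDerivAt (fun s => c s x y) (ct t x y) t)
    (hcx : ∀ t > (0:ℝ), ∀ x ∈ Set.Icc 0 L₁, ∀ y ∈ Set.Icc 0 L₂,
      HasDerivAt (fun a => c t a y) (cx t x y) x)
    (hcy : ∀ t > (0:ℝ), ∀ x ∈ Set.Icc 0 L₁, ∀ y ∈ Set.Icc 0 L₂,
      HasDerivAt (fun b => c t x b) (cy t x y) y)
    (hcxx : ∀ t > (0:ℝ), ∀ x ∈ Set.Icc 0 L₁, ∀ y ∈ Set.Icc 0 L₂,
      HasDerivAt (fun a => cx t a y) (cxx t x y) x)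
    (hcyy : ∀ t > (0:ℝ), ∀ x ∈ Set.Icc 0 L₁, ∀ y ∈ Set.Icc 0 L₂,
      HasDerivAt (fun b => cy t x b) (cyy t x y) y)
    -- continuity of the partial derivatives of `c` on `(0,∞) × cl(Ω)`
    (hctcont : ContinuousOn (fun q : ℝ × ℝ × ℝ => ct q.1 q.2.1 q.2.2)
      (Set.Ioi 0 ×ˢ Set.Icc 0 L₁ ×ˢ Set.Icc 0 L₂))
    (hcxcont : ContinuousOn (fun q : ℝ × ℝ × ℝ => cx q.1 q.2.1 q.2.2)
      (Set.Ioi 0 ×ˢ Set.Icc 0 L₁ ×ˢ Set.Icc 0 L₂))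
    (hcycont : ContinuousOn (fun q : ℝ × ℝ × ℝ => cy q.1 q.2.1 q.2.2)
      (Set.Ioi 0 ×ˢ Set.Icc 0 L₁ ×ˢ Set.Icc 0 L₂))
    (hcxxcont : ContinuousOn (fun q : ℝ × ℝ × ℝ => cxx q.1 q.2.1 q.2.2)
      (Set.Ioi 0 ×ˢ Set.Icc 0 L₁ ×ˢ Set.Icc 0 L₂))
    (hcyycont : ContinuousOn (fun q : ℝ × ℝ × ℝ => cyy q.1 q.2.1 q.2.2)
      (Set.Ioi 0 ×ˢ Set.Icc 0 L₁ ×ˢ Set.Icc 0 L₂))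
    -- (ii) the PDE on `(0,∞) × Ω`
    (hpde : ∀ t > (0:ℝ), ∀ x ∈ Set.Ioo 0 L₁, ∀ y ∈ Set.Ioo 0 L₂,
      (1 + k) * ct t x y + u₁ t x y * cx t x y + u₂ t x y * cy t x y =
        D * (cxx t x y + cyy t x y) - κ x y * c t x y)
    -- (iii) no-penetration and no-flux boundary conditions
    (hbc₁ : ∀ t > (0:ℝ), ∀ y ∈ Set.Icc 0 L₂,
      u₁ t 0 y = 0 ∧ u₁ t L₁ y = 0 ∧ cx t 0 y = 0 ∧ cx t L₁ y = 0)
    (hbc₂ : ∀ t > (0:ℝ), ∀ x ∈ Set.Icc 0 L₁,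
      u₂ t x 0 = 0 ∧ u₂ t x L₂ = 0 ∧ cy t x 0 = 0 ∧ cy t x L₂ = 0)
    -- (iv) bounds on the initial data
    (hinit : ∀ x ∈ Set.Icc 0 L₁, ∀ y ∈ Set.Icc 0 L₂, 0 ≤ c 0 x y ∧ c 0 x y ≤ M₂) :
    ∀ t, 0 ≤ t → ∀ x ∈ Set.Icc 0 L₁, ∀ y ∈ Set.Icc 0 L₂,
      0 ≤ c t x y ∧ c t x y ≤ M₂ := by
  have hpde_closed : ∀ t > (0:ℝ), ∀ x ∈ Icc 0 L₁, ∀ y ∈ Icc 0 L₂,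
      (1 + k) * ct t x y + u₁ t x y * cx t x y + u₂ t x y * cy t x y =
        D * (cxx t x y + cyy t x y) - κ x y * c t x y := by
    intro t ht x hx y hy
    have := hctcont.time_slice ht
    have := hcxcont.time_slice ht
    have := hcycont.time_slice ht
    have := hcxxcont.time_slice ht
    have := hcyycont.time_slice ht
    have := hccont.time_slice ht.le
    have := hu₁cont.time_slice ht.le
    have := hu₂cont.time_slice ht.le
    exact EqOn.of_Ioo_prod_Ioo hL₁ hL₂
      (f := fun p ↦ (1 + k) * ct t p.1 p.2 + u₁ t p.1 p.2 * cx t p.1 p.2 +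
        u₂ t p.1 p.2 * cy t p.1 p.2)
      (g := fun p ↦ D * (cxx t p.1 p.2 + cyy t p.1 p.2) - κ p.1 p.2 * c t p.1 p.2)
      (fun p hp ↦ hpde t ht p.1 hp.1 p.2 hp.2) (by fun_prop) (by fun_prop) (mk_mem_prod hx hy)
  have hsol : IsNeumannSolution L₁ L₂ k D κ u₁ u₂ c ct cx cy cxx cyy :=
    ⟨hct, hcx, hcy, hcxx, hcyy, hpde_closed, fun t ht y hy ↦ (hbc₁ t ht y hy).2.2,
      fun t ht x hx ↦ (hbc₂ t ht x hx).2.2⟩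
  intro t ht x hx y hy
  refine ⟨neg_nonpos.1 ?_, ?_⟩
  · exact hsol.neg.le_of_initial_le hL₁ hL₂ hk hD.le le_rfl hκnn hccont.neg
      (fun x hx y hy ↦ neg_nonpos.2 (hinit x hx y hy).1) t ht x hx y hy
  · exact hsol.le_of_initial_le hL₁ hL₂ hk hD.le hM₂ hκnn hccont
      (fun x hx y hy ↦ (hinit x hx y hy).2) t ht x hx y hy

/-- Maximum principle for the adsorption–convection–diffusion–reaction equation
`(1+k)∂ₜc + u·∇c = DΔc − κc` on the rectangle `Ω = (0,L₁)×(0,L₂)` with divergence-free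
velocity, no-penetration and no-flux boundary conditions: if `0 ≤ c(0,·) ≤ M₂` on `cl(Ω)`,
then `0 ≤ c(t,·) ≤ M₂` on `cl(Ω)` for all `t ≥ 0`.

Here `c t x y` is the concentration, `ct, cx, cy, cxx, cyy` are its partial derivatives
(first in time, first and second in each space variable), `u₁, u₂` the velocity components
with spatial derivatives `u₁x, u₂y`, `κ x y ≥ 0` the reaction rate, `k ≥ 0` the adsorption
coefficient and `D > 0` the diffusion coefficient. -/
theorem stmt_18 (L₁ L₂ k D M₂ : ℝ) (hL₁ : 0 < L₁) (hL₂ : 0 < L₂)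
    (hk : 0 ≤ k) (hD : 0 < D) (hM₂ : 0 ≤ M₂)
    (κ : ℝ → ℝ → ℝ)
    (hκcont : ContinuousOn (fun q : ℝ × ℝ => κ q.1 q.2) (Set.Icc 0 L₁ ×ˢ Set.Icc 0 L₂))
    (hκnn : ∀ x ∈ Set.Icc 0 L₁, ∀ y ∈ Set.Icc 0 L₂, 0 ≤ κ x y)
    (u₁ u₂ c ct cx cy cxx cyy u₁x u₂y : ℝ → ℝ → ℝ → ℝ)
    -- continuity of the velocity on `[0,∞) × cl(Ω)`
    (hu₁cont : ContinuousOn (fun q : ℝ × ℝ × ℝ => u₁ q.1 q.2.1 q.2.2)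
      (Set.Ici 0 ×ˢ Set.Icc 0 L₁ ×ˢ Set.Icc 0 L₂))
    (hu₂cont : ContinuousOn (fun q : ℝ × ℝ × ℝ => u₂ q.1 q.2.1 q.2.2)
      (Set.Ici 0 ×ˢ Set.Icc 0 L₁ ×ˢ Set.Icc 0 L₂))
    -- continuity of the concentration on `[0,∞) × cl(Ω)`
    (hccont : ContinuousOn (fun q : ℝ × ℝ × ℝ => c q.1 q.2.1 q.2.2)
      (Set.Ici 0 ×ˢ Set.Icc 0 L₁ ×ˢ Set.Icc 0 L₂))
    -- existence of the partial derivatives of `c` on `(0,∞) × cl(Ω)`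
    (hct : ∀ t > (0:ℝ), ∀ x ∈ Set.Icc 0 L₁, ∀ y ∈ Set.Icc 0 L₂,
      HasDerivAt (fun s => c s x y) (ct t x y) t)
    (hcx : ∀ t > (0:ℝ), ∀ x ∈ Set.Icc 0 L₁, ∀ y ∈ Set.Icc 0 L₂,
      HasDerivAt (fun a => c t a y) (cx t x y) x)
    (hcy : ∀ t > (0:ℝ), ∀ x ∈ Set.Icc 0 L₁, ∀ y ∈ Set.Icc 0 L₂,
      HasDerivAt (fun b => c t x b) (cy t x y) y)
    (hcxx : ∀ t > (0:ℝ), ∀ x ∈ Set.Icc 0 L₁, ∀ y ∈ Set.Icc 0 L₂,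
      HasDerivAt (fun a => cx t a y) (cxx t x y) x)
    (hcyy : ∀ t > (0:ℝ), ∀ x ∈ Set.Icc 0 L₁, ∀ y ∈ Set.Icc 0 L₂,
      HasDerivAt (fun b => cy t x b) (cyy t x y) y)
    -- continuity of the partial derivatives of `c` on `(0,∞) × cl(Ω)`
    (hctcont : ContinuousOn (fun q : ℝ × ℝ × ℝ => ct q.1 q.2.1 q.2.2)
      (Set.Ioi 0 ×ˢ Set.Icc 0 L₁ ×ˢ Set.Icc 0 L₂))
    (hcxcont : ContinuousOn (fun q : ℝ × ℝ × ℝ => cx q.1 q.2.1 q.2.2)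
      (Set.Ioi 0 ×ˢ Set.Icc 0 L₁ ×ˢ Set.Icc 0 L₂))
    (hcycont : ContinuousOn (fun q : ℝ × ℝ × ℝ => cy q.1 q.2.1 q.2.2)
      (Set.Ioi 0 ×ˢ Set.Icc 0 L₁ ×ˢ Set.Icc 0 L₂))
    (hcxxcont : ContinuousOn (fun q : ℝ × ℝ × ℝ => cxx q.1 q.2.1 q.2.2)
      (Set.Ioi 0 ×ˢ Set.Icc 0 L₁ ×ˢ Set.Icc 0 L₂))
    (hcyycont : ContinuousOn (fun q : ℝ × ℝ × ℝ => cyy q.1 q.2.1 q.2.2)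
      (Set.Ioi 0 ×ˢ Set.Icc 0 L₁ ×ˢ Set.Icc 0 L₂))
    -- spatial derivatives of the velocity on `(0,∞) × Ω`
    (hu₁x : ∀ t > (0:ℝ), ∀ x ∈ Set.Ioo 0 L₁, ∀ y ∈ Set.Ioo 0 L₂,
      HasDerivAt (fun a => u₁ t a y) (u₁x t x y) x)
    (hu₂y : ∀ t > (0:ℝ), ∀ x ∈ Set.Ioo 0 L₁, ∀ y ∈ Set.Ioo 0 L₂,
      HasDerivAt (fun b => u₂ t x b) (u₂y t x y) y)
    -- (i) incompressibility on `(0,∞) × Ω`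
    (hdiv : ∀ t > (0:ℝ), ∀ x ∈ Set.Ioo 0 L₁, ∀ y ∈ Set.Ioo 0 L₂,
      u₁x t x y + u₂y t x y = 0)
    -- (ii) the PDE on `(0,∞) × Ω`
    (hpde : ∀ t > (0:ℝ), ∀ x ∈ Set.Ioo 0 L₁, ∀ y ∈ Set.Ioo 0 L₂,
      (1 + k) * ct t x y + u₁ t x y * cx t x y + u₂ t x y * cy t x y =
        D * (cxx t x y + cyy t x y) - κ x y * c t x y)
    -- (iii) no-penetration and no-flux boundary conditions
    (hbc₁ : ∀ t > (0:ℝ), ∀ y ∈ Set.Icc 0 L₂,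
      u₁ t 0 y = 0 ∧ u₁ t L₁ y = 0 ∧ cx t 0 y = 0 ∧ cx t L₁ y = 0)
    (hbc₂ : ∀ t > (0:ℝ), ∀ x ∈ Set.Icc 0 L₁,
      u₂ t x 0 = 0 ∧ u₂ t x L₂ = 0 ∧ cy t x 0 = 0 ∧ cy t x L₂ = 0)
    -- (iv) bounds on the initial data
    (hinit : ∀ x ∈ Set.Icc 0 L₁, ∀ y ∈ Set.Icc 0 L₂, 0 ≤ c 0 x y ∧ c 0 x y ≤ M₂) :
    ∀ t, 0 ≤ t → ∀ x ∈ Set.Icc 0 L₁, ∀ y ∈ Set.Icc 0 L₂,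
      0 ≤ c t x y ∧ c t x y ≤ M₂ :=
  stmt_18_general L₁ L₂ k D M₂ hL₁ hL₂ hk hD hM₂ κ hκcont hκnn u₁ u₂ c ct cx cy cxx cyy hu₁cont
    hu₂cont hccont hct hcx hcy hcxx hcyy hctcont hcxcont hcycont hcxxcont hcyycont hpde hbc₁ hbc₂
    hinit
end
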